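/- Let T* join T' and T'' by edge (v, v_j), S = S' ∪ S'' with S' nonempty, and suppose color i is consistent in (T', S') with r'_i := max_{w ∈ V(T')∩C_i} (dist(w,S') − dist(w,v)) ≤ dist(v_j,S'') + 1 = ℓ''+1. Then for every w ∈ V(T')∩C_i, dist(w, S) = dist(w, S'), and consequently max_{w ∈ V(T')∩C_i} (dist(w,S) − dist(w,v)) = r'_i. -/

import Mathlib

/-! Every path from `w ∈ V(T')` into `S''` crosses the edge `{v, v_j}`, so
`dist(w, S'') = dist(w, v) + 1 + ℓ''`, and the bound on `r'_i` says exactly that this is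
at least `dist(w, S')`: adding `S''` changes no distance from a vertex of color `i` in `T'`. -/

/-- Distance from a vertex to a set of vertices (∞ if the set is empty). -/
noncomputable def setDist {V : Type*} (G : SimpleGraph V) (u : V) (S : Set V) : ℕ∞ :=
  ⨅ x ∈ S, G.edist u x

/-- The set of nearest neighbors of `u` in `S`. -/
def nearest {V : Type*} (G : SimpleGraph V) (S : Set V) (u : V) : Set V :=
  {x ∈ S | G.edist u x = setDist G u S}

/-- A vertex `u` is consistent in `(G, S)` if some nearest neighbor of `u` in `S`
has the same color as `u`. -/
def ConsistentAt {V : Type*} {k : ℕ} (G : SimpleGraph V) (c : V → Fin k) (S : Set V)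
    (u : V) : Prop :=
  ∃ x ∈ nearest G S u, c x = c u

/-- `S` is a consistent subset of the vertex-colored graph `(G, c)`. -/
def Consistent {V : Type*} {k : ℕ} (G : SimpleGraph V) (c : V → Fin k) (S : Set V) : Prop :=
  ∀ u, ConsistentAt G c S u

section SetDist

variable {V : Type*} (G : SimpleGraph V)

theorem setDist_union (u : V) (S T : Set V) :
    setDist G u (S ∪ T) = setDist G u S ⊓ setDist G u T :=
  iInf_union

theorem setDist_union_of_le {u : V} {S T : Set V} (h : setDist G u S ≤ setDist G u T) :
    setDist G u (S ∪ T) = setDist G u S := by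
  rw [setDist_union, inf_eq_left.mpr h]

theorem add_setDist_le_setDist {w z : V} {d : ℕ∞} {T : Set V}
    (hpass : ∀ x ∈ T, G.edist w x = d + G.edist z x) :
    d + setDist G z T ≤ setDist G w T :=
  le_iInf₂ fun x hx => (hpass x hx).symm ▸ add_le_add_right (iInf₂_le x hx) d

end SetDist

theorem rleft_preserved_general {V : Type*} {k : ℕ}
    (G : SimpleGraph V) (c : V → Fin k) (i : Fin k) (A B : Set V) (v vj : V)
    (hlaw : ∀ w ∈ A, ∀ x ∈ B, G.edist w x = G.edist w v + 1 + G.edist vj x)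
    (S' S'' : Set V) (hS''B : S'' ⊆ B)
    (hr : (⨆ w ∈ A ∩ {w | c w = i}, (setDist G w S' - G.edist w v)) ≤
      setDist G vj S'' + 1) :
    (∀ w ∈ A ∩ {w | c w = i}, setDist G w (S' ∪ S'') = setDist G w S') ∧
      (⨆ w ∈ A ∩ {w | c w = i}, (setDist G w (S' ∪ S'') - G.edist w v)) =
        ⨆ w ∈ A ∩ {w | c w = i}, (setDist G w S' - G.edist w v) := by
  have hdist : ∀ w ∈ A ∩ {w | c w = i}, setDist G w (S' ∪ S'') = setDist G w S' := by
    intro w hw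
    have hgap : setDist G w S' - G.edist w v ≤ setDist G vj S'' + 1 :=
      (le_iSup₂ (f := fun w _ => setDist G w S' - G.edist w v) w hw).trans hr
    apply setDist_union_of_le
    calc setDist G w S' ≤ G.edist w v + 1 + setDist G vj S'' := by
          rw [add_assoc, add_comm 1]; exact tsub_le_iff_left.mp hgap
      _ ≤ setDist G w S'' :=
          add_setDist_le_setDist G fun x hx => hlaw w hw.1 x (hS''B hx)
  exact ⟨hdist, iSup_congr fun w => iSup_congr fun hw => by rw [hdist w hw]⟩

/-- If color `i` is consistent in `(T', S')` and
`r'_i = max_{w ∈ V(T') ∩ C_i} (dist(w,S') − dist(w,v)) ≤ ℓ'' + 1`, then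
`dist(w, S) = dist(w, S')` for every `w ∈ V(T') ∩ C_i`, hence the maximum of
`dist(w,S) − dist(w,v)` equals `r'_i`. -/
theorem rleft_preserved {V : Type*} {k : ℕ}
    (G : SimpleGraph V) (c : V → Fin k) (i : Fin k) (A B : Set V) (v vj : V)
    (hconn : G.Connected)
    (hv : v ∈ A) (hvj : vj ∈ B) (hdisj : Disjoint A B) (hcover : A ∪ B = Set.univ)
    (hlaw : ∀ w ∈ A, ∀ x ∈ B, G.edist w x = G.edist w v + 1 + G.edist vj x)
    (S' S'' : Set V) (hS'A : S' ⊆ A) (hS''B : S'' ⊆ B)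
    (hCne : (A ∩ {w | c w = i}).Nonempty) (hS' : S'.Nonempty)
    (hcons : ∀ w ∈ A, c w = i → ConsistentAt G c S' w)
    (hr : (⨆ w ∈ A ∩ {w | c w = i}, (setDist G w S' - G.edist w v)) ≤
      setDist G vj S'' + 1) :
    (∀ w ∈ A ∩ {w | c w = i}, setDist G w (S' ∪ S'') = setDist G w S') ∧
      (⨆ w ∈ A ∩ {w | c w = i}, (setDist G w (S' ∪ S'') - G.edist w v)) =
        ⨆ w ∈ A ∩ {w | c w = i}, (setDist G w S' - G.edist w v) :=
  rleft_preserved_general G c i A B v vj hlaw S' S'' hS''B hr
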